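/- Let κ be a measurable cardinal, D a normal ultrafilter on κ, and λ a cardinal with λ ≥ 2^κ. Suppose that for each ξ < κ, w_ξ is a subset of the ordinal λ + κ with |w_ξ| ≤ 2^{ℵ₀} and λ + ξ ∈ w_ξ. Then there exist A ∈ D and a set w* such that: (a) for all distinct γ, ξ ∈ A, λ + ξ ∉ w_γ; (b) ⟨w_γ : γ ∈ A⟩ is a Δ-system with heart w*, i.e. w_γ ∩ w_ξ = w* for all distinct γ, ξ ∈ A; (c) for every γ ∈ A, the set w_γ ∩ [λ, λ+γ) is the same for all γ ∈ A and is contained in w*, w_γ ∩ {λ + ξ : ξ ∈ A} = {λ + γ}, and sup(w_γ) < λ + min(A \ (γ+1)). -/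

import Mathlib

open Cardinal Ordinal

universe u

/-- `D` is a normal ultrafilter on the (uncountable) cardinal `κ`, where subsets of
`κ` are represented as sets of ordinals `< κ`: `D` is a proper, `κ`-complete,
nonprincipal ultrafilter on `Set.Iio κ.ord` closed under diagonal intersections. -/
def IsNormalUltrafilterOn (κ : Cardinal.{u}) (D : Set (Set Ordinal.{u})) : Prop :=
  (∀ Y ∈ D, Y ⊆ Set.Iio κ.ord) ∧
  Set.Iio κ.ord ∈ D ∧
  (∅ : Set Ordinal.{u}) ∉ D ∧
  (∀ Y ∈ D, ∀ Z : Set Ordinal.{u}, Y ⊆ Z → Z ⊆ Set.Iio κ.ord → Z ∈ D) ∧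
  (∀ Y : Set Ordinal.{u}, Y ⊆ Set.Iio κ.ord → Y ∈ D ∨ Set.Iio κ.ord \ Y ∈ D) ∧
  (∀ α : Ordinal.{u}, {α} ∉ D) ∧
  (∀ (ι : Type u) (f : ι → Set Ordinal.{u}), #ι < κ → (∀ i, f i ∈ D) →
    Set.Iio κ.ord ∩ ⋂ i, f i ∈ D) ∧
  (∀ A : Ordinal.{u} → Set Ordinal.{u}, (∀ α < κ.ord, A α ∈ D) →
    {β : Ordinal.{u} | β < κ.ord ∧ ∀ α < β, β ∈ A α} ∈ D)

namespace DeltaAux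

variable {κ : Cardinal.{u}} {D : Set (Set Ordinal.{u})}

theorem nonempty_of_mem (hD : IsNormalUltrafilterOn κ D) {Y : Set Ordinal.{u}}
    (hY : Y ∈ D) : Y.Nonempty := by
  rcases Set.eq_empty_or_nonempty Y with h | h
  · exact absurd (h ▸ hY) hD.2.2.1
  · exact h

/-- κ-completeness over an index which is a set of ordinals of size < lift κ. -/
theorem inter_set (hD : IsNormalUltrafilterOn κ D) {S : Set Ordinal.{u}}
    (hS : #S < Cardinal.lift.{u+1} κ) (f : S → Set Ordinal.{u})
    (hf : ∀ s, f s ∈ D) : Set.Iio κ.ord ∩ ⋂ s, f s ∈ D := by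
  obtain ⟨ν, hν, hlift⟩ := Cardinal.lt_lift_iff.mp hS
  have h1 : Cardinal.lift.{u+1, u} #(ν.out) = Cardinal.lift.{u, u+1} #S := by
    rw [mk_out, hlift]
    exact (Cardinal.lift_id'.{u, u+1} _).symm
  obtain ⟨e⟩ := Cardinal.lift_mk_eq'.{u, u+1}.mp h1
  have h2 := hD.2.2.2.2.2.2.1 ν.out (fun i => f (e i)) (by rwa [mk_out]) (fun i => hf _)
  have h3 : (⋂ i, f (e i)) = ⋂ s, f s := by
    ext x
    simp only [Set.mem_iInter]
    exact ⟨fun h s => by simpa using h (e.symm s), fun h i => h (e i)⟩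
  rwa [h3] at h2

theorem inter_two (hD : IsNormalUltrafilterOn κ D) (hκ : ℵ₀ < κ)
    {Y Z : Set Ordinal.{u}} (hY : Y ∈ D) (hZ : Z ∈ D) :
    Set.Iio κ.ord ∩ (Y ∩ Z) ∈ D := by
  have h2 := hD.2.2.2.2.2.2.1 (ULift.{u} Bool)
    (fun b => if b.down then Y else Z)
    (by
      rw [Cardinal.mk_uLift, Cardinal.mk_bool]
      exact lt_trans (by rw [Cardinal.lift_ofNat]; exact nat_lt_aleph0 2) hκ)
    (fun i => by by_cases h : i.down <;> simp [h, hY, hZ])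
  have h3 : (⋂ i : ULift.{u} Bool, if i.down then Y else Z) = Y ∩ Z := by
    ext x
    simp only [Set.mem_iInter, Set.mem_inter_iff]
    constructor
    · intro h
      have h1 := h ⟨true⟩
      have h2 := h ⟨false⟩
      simp_all
    · rintro ⟨h1, h2⟩ ⟨b⟩
      by_cases h : b <;> simp [h, h1, h2]
  rwa [h3] at h2

theorem compl_small (hD : IsNormalUltrafilterOn κ D)
    {Y : Set Ordinal.{u}} (hYI : Y ⊆ Set.Iio κ.ord)
    (hY : #Y < Cardinal.lift.{u+1} κ) : Set.Iio κ.ord \ Y ∈ D := by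
  have h2 := inter_set hD hY (fun y => Set.Iio κ.ord \ {y.1}) (fun y => by
    rcases hD.2.2.2.2.1 {y.1} (by simpa using hYI y.2) with h | h
    · exact absurd h (hD.2.2.2.2.2.1 y.1)
    · exact h)
  have h3 : Set.Iio κ.ord ∩ (⋂ y : Y, Set.Iio κ.ord \ {y.1}) = Set.Iio κ.ord \ Y := by
    ext x
    simp only [Set.mem_inter_iff, Set.mem_iInter, Set.mem_diff, Set.mem_singleton_iff]
    constructor
    · rintro ⟨hx, h⟩
      exact ⟨hx, fun hxY => (h ⟨x, hxY⟩).2 rfl⟩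
    · rintro ⟨hx, h⟩
      exact ⟨hx, fun y => ⟨hx, fun he => h (he ▸ y.2)⟩⟩
  rwa [h3] at h2

theorem small_not_mem (hD : IsNormalUltrafilterOn κ D) (hκ : ℵ₀ < κ)
    {Y : Set Ordinal.{u}} (hYI : Y ⊆ Set.Iio κ.ord)
    (hY : #Y < Cardinal.lift.{u+1} κ) : Y ∉ D := by
  intro hYD
  have h1 := inter_two hD hκ hYD (compl_small hD hYI hY)
  have h2 : Set.Iio κ.ord ∩ (Y ∩ (Set.Iio κ.ord \ Y)) = ∅ := by
    ext x; simp only [Set.mem_inter_iff, Set.mem_diff, Set.mem_empty_iff_false]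
    tauto
  rw [h2] at h1
  exact hD.2.2.1 h1


theorem strong_limit (hD : IsNormalUltrafilterOn κ D) {ν : Cardinal.{u}}
    (hν : ν < κ) : 2 ^ ν < κ := by
  classical
  by_contra h
  push_neg at h
  -- build an injection from Iio κ.ord into ν.out → Prop
  have hcard : Cardinal.lift.{u, u+1} #(Set.Iio κ.ord) ≤
      Cardinal.lift.{u+1, u} #(ν.out → Prop) := by
    rw [Cardinal.mk_Iio_ordinal, card_ord, Cardinal.lift_id'.{u, u+1}]
    have : #(ν.out → Prop) = 2 ^ ν := by
      rw [show (ν.out → Prop) = Set ν.out from rfl, Cardinal.mk_set, mk_out]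
    rw [this]
    exact Cardinal.lift_le.mpr h
  obtain ⟨f⟩ := Cardinal.lift_mk_le'.{u+1, u}.mp hcard
  set N : ν.out → Set Ordinal.{u} :=
    fun t => {β | ∃ h : β < κ.ord, f ⟨β, h⟩ t} with hN
  have hNI : ∀ t, N t ⊆ Set.Iio κ.ord := fun t β hβ => hβ.1
  have hg : ∀ t, (if N t ∈ D then N t else Set.Iio κ.ord \ N t) ∈ D := by
    intro t
    by_cases h : N t ∈ D
    · simpa [h]
    · rcases hD.2.2.2.2.1 (N t) (hNI t) with h' | h'
      · exact absurd h' h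
      · simpa [h]
  have hB := hD.2.2.2.2.2.2.1 ν.out _ (by rw [mk_out]; exact hν) hg
  obtain ⟨β0, hβ0⟩ := nonempty_of_mem hD hB
  have key : ∀ β (hβ : β ∈ Set.Iio κ.ord ∩ ⋂ t,
        if N t ∈ D then N t else Set.Iio κ.ord \ N t),
      ∀ t, (f ⟨β, hβ.1⟩ t ↔ N t ∈ D) := by
    intro β hβ t
    have hβt := Set.mem_iInter.mp hβ.2 t
    by_cases h : N t ∈ D
    · rw [if_pos h] at hβt
      obtain ⟨h', hf⟩ := hβt
      exact ⟨fun _ => h, fun _ => hf⟩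
    · rw [if_neg h] at hβt
      exact ⟨fun hf => absurd (⟨hβ.1, hf⟩ : β ∈ N t) hβt.2, fun hd => absurd hd h⟩
  have hsub : (Set.Iio κ.ord ∩ ⋂ t,
      if N t ∈ D then N t else Set.Iio κ.ord \ N t) ⊆ {β0} := by
    intro β hβ
    have heq : f ⟨β, hβ.1⟩ = f ⟨β0, hβ0.1⟩ := by
      funext t
      exact propext ((key β hβ t).trans (key β0 hβ0 t).symm)
    have := f.injective heq
    simpa using congrArg Subtype.val this
  have hsing : ({β0} : Set Ordinal.{u}) ∈ D :=
    hD.2.2.2.1 _ hB _ hsub (by intro x hx; rw [hx]; exact hβ0.1)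
  exact hD.2.2.2.2.2.1 β0 hsing

/-- any set of size < κ of ordinals < κ.ord is strictly bounded below κ.ord -/
theorem exists_bound (hD : IsNormalUltrafilterOn κ D) (hκ : ℵ₀ < κ)
    {S : Set Ordinal.{u}} (hSI : S ⊆ Set.Iio κ.ord)
    (hS : #S < Cardinal.lift.{u+1} κ) :
    ∃ β < κ.ord, ∀ η ∈ S, η < β := by
  have hf : ∀ η : S, Set.Iio κ.ord \ (Set.Iio κ.ord ∩ Set.Iic η.1) ∈ D := by
    intro η
    apply compl_small hD (by intro x hx; exact hx.1)
    have hsub : Set.Iio κ.ord ∩ Set.Iic η.1 ⊆ Set.Iio (η.1 + 1) := by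
      intro x hx
      have h1 : (η.1 : Ordinal) < η.1 + 1 := by
        rw [Ordinal.add_one_eq_succ]; exact Order.lt_succ _
      exact lt_of_le_of_lt hx.2 h1
    calc #(Set.Iio κ.ord ∩ Set.Iic η.1 : Set Ordinal.{u}) ≤ #(Set.Iio (η.1+1)) :=
          Cardinal.mk_le_mk_of_subset hsub
      _ = Cardinal.lift.{u+1} (η.1+1).card := Cardinal.mk_Iio_ordinal _
      _ < Cardinal.lift.{u+1} κ := by
          apply Cardinal.lift_lt.mpr
          apply Cardinal.lt_ord.mp
          rw [Ordinal.add_one_eq_succ]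
          exact (Cardinal.isSuccLimit_ord hκ.le).succ_lt (hSI η.2)
  have hB := inter_set hD hS _ hf
  obtain ⟨β, hβ⟩ := nonempty_of_mem hD hB
  refine ⟨β, hβ.1, fun η hη => ?_⟩
  have h1 := Set.mem_iInter.mp hβ.2 ⟨η, hη⟩
  by_contra h
  push_neg at h
  exact h1.2 ⟨hβ.1, h⟩

theorem unbounded_of_mem (hD : IsNormalUltrafilterOn κ D) (hκ : ℵ₀ < κ)
    {A : Set Ordinal.{u}} (hA : A ∈ D) :
    ∀ β < κ.ord, ∃ ξ ∈ A, β < ξ := by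
  intro β hβ
  by_contra h
  push_neg at h
  have hsub : A ⊆ Set.Iio (β + 1) := fun x hx => lt_of_le_of_lt (h x hx)
    (by rw [Ordinal.add_one_eq_succ]; exact Order.lt_succ _)
  have hsmall : #A < Cardinal.lift.{u+1} κ := by
    calc #A ≤ #(Set.Iio (β+1)) := Cardinal.mk_le_mk_of_subset hsub
      _ = Cardinal.lift.{u+1} (β+1).card := Cardinal.mk_Iio_ordinal _
      _ < Cardinal.lift.{u+1} κ := by
          apply Cardinal.lift_lt.mpr
          apply Cardinal.lt_ord.mp
          rw [Ordinal.add_one_eq_succ]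
          exact (Cardinal.isSuccLimit_ord hκ.le).succ_lt hβ
  exact small_not_mem hD hκ (hD.1 A hA) hsmall hA

end DeltaAux

open DeltaAux

/-- Shelah 619, proof of Theorem 2.1 (Δ-system refinement): given a normal
ultrafilter `D` on a measurable cardinal `κ`, a cardinal `λ ≥ 2^κ`, and sets
`w ξ ⊆ λ + κ` of cardinality `≤ 2^ℵ₀` with `λ + ξ ∈ w ξ` for `ξ < κ`, there are
`A ∈ D` and a heart `w*` satisfying the separation, Δ-system and constancy
conditions (a)–(c). -/
theorem delta_system_refinement_on_normal_ultrafilter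
    (κ lam : Cardinal.{u}) (hκ : ℵ₀ < κ)
    (D : Set (Set Ordinal.{u})) (hD : IsNormalUltrafilterOn κ D)
    (hlam : 2 ^ κ ≤ lam)
    (w : Ordinal.{u} → Set Ordinal.{u})
    (hwsub : ∀ ξ < κ.ord, w ξ ⊆ Set.Iio (lam.ord + κ.ord))
    (hwcard : ∀ ξ < κ.ord, #(w ξ) ≤ 2 ^ (ℵ₀ : Cardinal.{u + 1}))
    (hwmem : ∀ ξ < κ.ord, lam.ord + ξ ∈ w ξ) :
    ∃ A ∈ D, ∃ wstar : Set Ordinal.{u},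
      (∀ γ ∈ A, ∀ ξ ∈ A, γ ≠ ξ → lam.ord + ξ ∉ w γ) ∧
      (∀ γ ∈ A, ∀ ξ ∈ A, γ ≠ ξ → w γ ∩ w ξ = wstar) ∧
      (∃ c : Set Ordinal.{u}, c ⊆ wstar ∧
        ∀ γ ∈ A, w γ ∩ Set.Ico lam.ord (lam.ord + γ) = c) ∧
      (∀ γ ∈ A, w γ ∩ {x | ∃ ξ ∈ A, x = lam.ord + ξ} = {lam.ord + γ}) ∧
      (∀ γ ∈ A, sSup (w γ) < lam.ord + sInf {ξ | ξ ∈ A ∧ γ < ξ}) := by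
  classical
  -- continuum facts
  have hc : (2 ^ (ℵ₀ : Cardinal.{u})) < κ := strong_limit hD hκ
  have hsc : Order.succ (2 ^ (ℵ₀ : Cardinal.{u})) < κ :=
    lt_of_le_of_lt (Order.succ_le_of_lt (Cardinal.cantor _)) (strong_limit hD hc)
  have hliftc : (2 ^ (ℵ₀ : Cardinal.{u+1})) = Cardinal.lift.{u+1} (2 ^ (ℵ₀ : Cardinal.{u})) := by
    rw [Cardinal.lift_two_power, Cardinal.lift_aleph0]
  have hwc : ∀ γ < κ.ord, #(w γ) ≤ Cardinal.lift.{u+1} (2 ^ (ℵ₀ : Cardinal.{u})) :=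
    fun γ hγ => hliftc ▸ hwcard γ hγ
  -- the candidate heart
  set N : Ordinal.{u} → Set Ordinal.{u} := fun x => {γ | γ < κ.ord ∧ x ∈ w γ} with hN
  have hNI : ∀ x, N x ⊆ Set.Iio κ.ord := fun x γ hγ => hγ.1
  set wstar : Set Ordinal.{u} := {x | N x ∈ D} with hws
  -- the heart is small
  have hwsmall : #wstar < Cardinal.lift.{u+1} κ := by
    by_contra h
    push_neg at h
    have hsub' : Cardinal.lift.{u+1} (Order.succ (2 ^ (ℵ₀ : Cardinal.{u}))) ≤ #wstar :=
      le_trans (Cardinal.lift_le.mpr hsc.le) h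
    obtain ⟨T, hTsub, hTcard⟩ := Cardinal.le_mk_iff_exists_subset.mp hsub'
    have hTsmall : #T < Cardinal.lift.{u+1} κ := by
      rw [hTcard]; exact Cardinal.lift_lt.mpr hsc
    have hB := inter_set hD hTsmall (fun x => N x.1) (fun x => hTsub x.2)
    obtain ⟨γ, hγ⟩ := nonempty_of_mem hD hB
    have hTw : T ⊆ w γ := fun x hx => (Set.mem_iInter.mp hγ.2 ⟨x, hx⟩).2
    have h1 := Cardinal.mk_le_mk_of_subset hTw
    rw [hTcard] at h1
    have h2 := le_trans h1 (hwc γ hγ.1)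
    rw [Cardinal.lift_succ] at h2
    exact absurd h2 (not_le.mpr (Order.lt_succ _))
  -- A1 : the heart is contained in every w γ
  have hA1D := inter_set hD hwsmall (fun x : wstar => N x.1) (fun x => x.2)
  set A1 := Set.Iio κ.ord ∩ ⋂ x : wstar, N x.1 with hA1def
  have hA1prop : ∀ γ ∈ A1, wstar ⊆ w γ :=
    fun γ hγ x hx => (Set.mem_iInter.mp hγ.2 ⟨x, hx⟩).2
  -- complements of non-heart points
  have hcompl_notstar : ∀ x, x ∉ wstar → Set.Iio κ.ord \ N x ∈ D := by
    intro x hx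
    rcases hD.2.2.2.2.1 (N x) (hNI x) with h | h
    · exact absurd h hx
    · exact h
  -- E sets and A2 (Δ-system)
  set E : Ordinal.{u} → Set Ordinal.{u} :=
    fun γ => Set.Iio κ.ord ∩ ⋂ x : ↥(w γ \ wstar), (Set.Iio κ.ord \ N x.1) with hE
  have hED : ∀ γ < κ.ord, E γ ∈ D := by
    intro γ hγ
    refine inter_set hD ?_ _ (fun x => hcompl_notstar x.1 x.2.2)
    calc #(w γ \ wstar : Set Ordinal.{u}) ≤ #(w γ) :=
          Cardinal.mk_le_mk_of_subset Set.diff_subset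
      _ ≤ _ := hwc γ hγ
      _ < Cardinal.lift.{u+1} κ := Cardinal.lift_lt.mpr hc
  have hEprop : ∀ γ ξ, ξ ∈ E γ → ∀ x ∈ w γ, x ∉ wstar → x ∉ w ξ := by
    intro γ ξ hξ x hx1 hx2 hx3
    exact (Set.mem_iInter.mp hξ.2 ⟨x, hx1, hx2⟩).2 ⟨hξ.1, hx3⟩
  have hA2D := hD.2.2.2.2.2.2.2 E hED
  set A2 := {β : Ordinal.{u} | β < κ.ord ∧ ∀ α < β, β ∈ E α} with hA2def
  -- S3 (indices whose κ-part point is in the heart), A3, G sets and A4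
  set S3 : Set Ordinal.{u} := {η | η < κ.ord ∧ lam.ord + η ∈ wstar} with hS3
  have hS3small : #S3 < Cardinal.lift.{u+1} κ := by
    have hinj : Function.Injective (fun η : S3 => (⟨lam.ord + η.1, η.2.2⟩ : wstar)) := by
      intro a b hab
      have h1 := congrArg Subtype.val hab
      simp only at h1
      apply Subtype.ext
      have := congrArg (fun z => z - lam.ord) h1
      simpa [Ordinal.add_sub_cancel] using this
    exact lt_of_le_of_lt (Cardinal.mk_le_of_injective hinj) hwsmall
  have hA3D : Set.Iio κ.ord \ S3 ∈ D := compl_small hD (fun η hη => hη.1) hS3small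
  set A3 := Set.Iio κ.ord \ S3 with hA3def
  set G : Ordinal.{u} → Set Ordinal.{u} := fun η => {ξ | ξ < κ.ord ∧ η < ξ} with hG
  have hA4D := inter_set hD hS3small
    (fun η : S3 => if G η.1 ∈ D then G η.1 else Set.Iio κ.ord \ G η.1)
    (fun η => by
      by_cases h : G η.1 ∈ D
      · simpa [h]
      · rcases hD.2.2.2.2.1 (G η.1) (fun ξ hξ => hξ.1) with h' | h'
        · exact absurd h' h
        · simpa [h])
  set A4 := Set.Iio κ.ord ∩
    ⋂ η : S3, (if G η.1 ∈ D then G η.1 else Set.Iio κ.ord \ G η.1) with hA4def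
  have hA4prop : ∀ γ ∈ A4, ∀ η ∈ S3, (η < γ ↔ G η ∈ D) := by
    intro γ hγ η hη
    have h1 := Set.mem_iInter.mp hγ.2 ⟨η, hη⟩
    by_cases h : G η ∈ D
    · rw [if_pos h] at h1
      exact ⟨fun _ => h, fun _ => h1.2⟩
    · rw [if_neg h] at h1
      exact ⟨fun hlt => absurd (⟨hγ.1, hlt⟩ : γ ∈ G η) h1.2, fun hd => absurd hd h⟩
  -- H sets and A5 (initial segments of w γ below λ+γ are in the heart)
  set H : Ordinal.{u} → Set Ordinal.{u} :=
    fun η => {γ | γ < κ.ord ∧ (lam.ord + η ∈ wstar ∨ lam.ord + η ∉ w γ)} with hH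
  have hHD : ∀ η, H η ∈ D := by
    intro η
    by_cases h : lam.ord + η ∈ wstar
    · exact hD.2.2.2.1 _ hD.2.1 (H η) (fun γ hγ => ⟨hγ, Or.inl h⟩) (fun γ hγ => hγ.1)
    · exact hD.2.2.2.1 _ (hcompl_notstar _ h) (H η)
        (fun γ hγ => ⟨hγ.1, Or.inr (fun hw => hγ.2 ⟨hγ.1, hw⟩)⟩) (fun γ hγ => hγ.1)
  have hA5D := hD.2.2.2.2.2.2.2 H (fun η _ => hHD η)
  set A5 := {β : Ordinal.{u} | β < κ.ord ∧ ∀ α < β, β ∈ H α} with hA5def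
  -- bounds for the sets w γ, K sets and A6
  have hub : ∀ γ, γ < κ.ord →
      ∃ β, β < κ.ord ∧ ∀ η, η < κ.ord → lam.ord + η ∈ w γ → η < β := by
    intro γ hγ
    set U : Set Ordinal.{u} := {η | η < κ.ord ∧ lam.ord + η ∈ w γ} with hU
    have hUsmall : #U < Cardinal.lift.{u+1} κ := by
      have hinj : Function.Injective (fun η : U => (⟨lam.ord + η.1, η.2.2⟩ : w γ)) := by
        intro a b hab
        have h1 := congrArg Subtype.val hab
        simp only at h1
        apply Subtype.ext
        have := congrArg (fun z => z - lam.ord) h1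
        simpa [Ordinal.add_sub_cancel] using this
      calc #U ≤ #(w γ) := Cardinal.mk_le_of_injective hinj
        _ ≤ _ := hwc γ hγ
        _ < Cardinal.lift.{u+1} κ := Cardinal.lift_lt.mpr hc
    obtain ⟨β, hβ1, hβ2⟩ := exists_bound hD hκ (fun η hη => hη.1) hUsmall
    exact ⟨β, hβ1, fun η h1 h2 => hβ2 η ⟨h1, h2⟩⟩
  choose! b hb using hub
  set K : Ordinal.{u} → Set Ordinal.{u} :=
    fun γ => {ξ | ξ < κ.ord ∧ (ξ ≤ γ ∨ b γ + 1 ≤ ξ)} with hK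
  have hKD : ∀ γ < κ.ord, K γ ∈ D := by
    intro γ hγ
    have hYsmall : #(Set.Iio κ.ord ∩ Set.Iio (b γ + 1) : Set Ordinal.{u}) <
        Cardinal.lift.{u+1} κ := by
      calc _ ≤ #(Set.Iio (b γ + 1) : Set Ordinal.{u}) :=
            Cardinal.mk_le_mk_of_subset Set.inter_subset_right
        _ = Cardinal.lift.{u+1} (b γ + 1).card := Cardinal.mk_Iio_ordinal _
        _ < _ := by
            apply Cardinal.lift_lt.mpr
            apply Cardinal.lt_ord.mp
            rw [Ordinal.add_one_eq_succ]
            exact (Cardinal.isSuccLimit_ord hκ.le).succ_lt (hb γ hγ).1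
    have hd := compl_small hD Set.inter_subset_left hYsmall
    refine hD.2.2.2.1 _ hd (K γ) ?_ (fun ξ hξ => hξ.1)
    intro ξ hξ
    refine ⟨hξ.1, ?_⟩
    by_contra hcon
    push_neg at hcon
    exact hξ.2 ⟨hξ.1, hcon.2⟩
  have hA6D := hD.2.2.2.2.2.2.2 K hKD
  set A6 := {β : Ordinal.{u} | β < κ.ord ∧ ∀ α < β, β ∈ K α} with hA6def
  -- the final set A
  have hAD : (Set.Iio κ.ord ∩ (A1 ∩ (Set.Iio κ.ord ∩ (A2 ∩ (Set.Iio κ.ord ∩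
      (A3 ∩ (Set.Iio κ.ord ∩ (A4 ∩ (Set.Iio κ.ord ∩ (A5 ∩ A6)))))))))) ∈ D :=
    inter_two hD hκ hA1D (inter_two hD hκ hA2D (inter_two hD hκ hA3D
      (inter_two hD hκ hA4D (inter_two hD hκ hA5D hA6D))))
  set A := Set.Iio κ.ord ∩ (A1 ∩ (Set.Iio κ.ord ∩ (A2 ∩ (Set.Iio κ.ord ∩
      (A3 ∩ (Set.Iio κ.ord ∩ (A4 ∩ (Set.Iio κ.ord ∩ (A5 ∩ A6))))))))) with hAdef
  -- the Δ-system property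
  have key : ∀ γ ∈ A, ∀ ξ ∈ A, γ ≠ ξ → w γ ∩ w ξ = wstar := by
    intro γ hγ ξ hξ hne'
    obtain ⟨hγI, hγ1, _, hγ2, _, hγ3, _, hγ4, _, hγ5, hγ6⟩ := hγ
    obtain ⟨hξI, hξ1, _, hξ2, _, hξ3, _, hξ4, _, hξ5, hξ6⟩ := hξ
    apply Set.Subset.antisymm
    · intro x hx
      by_contra hxs
      rcases lt_or_gt_of_ne hne' with hlt | hlt
      · exact hEprop γ ξ (hξ2.2 γ hlt) x hx.1 hxs hx.2
      · exact hEprop ξ γ (hγ2.2 ξ hlt) x hx.2 hxs hx.1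
    · intro x hx
      exact ⟨hA1prop γ hγ1 hx, hA1prop ξ hξ1 hx⟩
  -- (a)
  have parta : ∀ γ ∈ A, ∀ ξ ∈ A, γ ≠ ξ → lam.ord + ξ ∉ w γ := by
    intro γ hγ ξ hξ hne' hmem'
    have hξI : ξ < κ.ord := hξ.1
    have hξ3 : ξ ∈ A3 := hξ.2.2.2.2.2.1
    have hxw : lam.ord + ξ ∈ w γ ∩ w ξ := ⟨hmem', hwmem ξ hξI⟩
    rw [key γ hγ ξ hξ hne'] at hxw
    exact hξ3.2 ⟨hξI, hxw⟩
  refine ⟨A, hAD, wstar, parta, key, ?_, ?_, ?_⟩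
  · -- (c1)
    refine ⟨(fun η => lam.ord + η) '' {η | η ∈ S3 ∧ G η ∈ D}, ?_, ?_⟩
    · rintro x ⟨η, ⟨hη1, _⟩, rfl⟩
      exact hη1.2
    · intro γ hγ
      obtain ⟨hγI, hγ1, _, hγ2, _, hγ3, _, hγ4, _, hγ5, hγ6⟩ := hγ
      ext x
      constructor
      · rintro ⟨hxw, hx1, hx2⟩
        have hxe : lam.ord + (x - lam.ord) = x := Ordinal.add_sub_cancel_of_le hx1
        have hηγ : x - lam.ord < γ := by
          rw [← add_lt_add_iff_left lam.ord, hxe]; exact hx2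
        have hηκ : x - lam.ord < κ.ord := lt_trans hηγ hγI
        have hH' : γ ∈ H (x - lam.ord) := hγ5.2 _ hηγ
        have hstar : lam.ord + (x - lam.ord) ∈ wstar := by
          rcases hH'.2 with h | h
          · exact h
          · rw [hxe] at h; exact absurd hxw h
        have hηS3 : x - lam.ord ∈ S3 := ⟨hηκ, hstar⟩
        exact ⟨x - lam.ord, ⟨hηS3, (hA4prop γ hγ4 _ hηS3).mp hηγ⟩, hxe⟩
      · rintro ⟨η, ⟨hηS3, hGη⟩, rfl⟩
        refine ⟨hA1prop γ hγ1 hηS3.2, le_self_add, ?_⟩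
        exact add_lt_add_right ((hA4prop γ hγ4 η hηS3).mpr hGη) _
  · -- (c2)
    intro γ hγ
    ext x
    simp only [Set.mem_inter_iff, Set.mem_setOf_eq, Set.mem_singleton_iff]
    constructor
    · rintro ⟨hxw, ξ, hξA, rfl⟩
      by_cases h : γ = ξ
      · rw [h]
      · exact absurd hxw (parta γ hγ ξ hξA h)
    · rintro rfl
      exact ⟨hwmem γ hγ.1, γ, hγ, rfl⟩
  · -- (c3)
    intro γ hγ
    have hγI : γ < κ.ord := hγ.1
    obtain ⟨ξ', hξ'A, hγξ'⟩ := unbounded_of_mem hD hκ hAD γ hγI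
    have hQne : {ξ | ξ ∈ A ∧ γ < ξ}.Nonempty := ⟨ξ', hξ'A, hγξ'⟩
    have hmin := csInf_mem hQne
    have hm6 : sInf {ξ | ξ ∈ A ∧ γ < ξ} ∈ A6 := hmin.1.2.2.2.2.2.2.2.2.2.2
    have hKm : sInf {ξ | ξ ∈ A ∧ γ < ξ} ∈ K γ := hm6.2 γ hmin.2
    have hbm : b γ + 1 ≤ sInf {ξ | ξ ∈ A ∧ γ < ξ} := by
      rcases hKm.2 with h | h
      · exact absurd hmin.2 (not_lt.mpr h)
      · exact h
    have hsup : sSup (w γ) ≤ lam.ord + b γ := by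
      apply csSup_le ⟨_, hwmem γ hγI⟩
      intro x hx
      rcases lt_or_ge x lam.ord with h | h
      · exact le_trans h.le le_self_add
      · have hxe : lam.ord + (x - lam.ord) = x := Ordinal.add_sub_cancel_of_le h
        have hxκ : x - lam.ord < κ.ord := by
          have h2 := hwsub γ hγI hx
          rw [← hxe] at h2
          exact (add_lt_add_iff_left _).mp h2
        have h3 := (hb γ hγI).2 (x - lam.ord) hxκ (by rw [hxe]; exact hx)
        rw [← hxe]
        exact add_le_add_right h3.le _
    calc sSup (w γ) ≤ lam.ord + b γ := hsup
      _ < lam.ord + (b γ + 1) := add_lt_add_right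
          (by rw [Ordinal.add_one_eq_succ]; exact Order.lt_succ _) _
      _ ≤ lam.ord + sInf {ξ | ξ ∈ A ∧ γ < ξ} := add_le_add_right hbm _
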